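/- arXiv:1106.5767 — 4 statements merged into one kernel-verified Lean document; each statement's English description precedes it below -/
import Mathlib

section
/- If L₁ = {a^m b^m : m ≥ 1} and L₂ = {c^n d^n : n ≥ 1}, then the ordinary shuffle L₁ ∐ L₂ is not context-free. -/
/-!
Every word of the shuffle has as many `a`s as `b`s and as many `c`s as `d`s. Pumping
`aᴺ cᴺ bᴺ dᴺ` (with `N` beyond the pumping constant) must therefore add letters of one of the
pairs `a, b` or `c, d` in equal numbers, hence both letters of that pair; but in this word the
two are separated by a block of length `N`, longer than the pumping window.

The pumping lemma is proved with parse trees: a parse tree of minimal size of a long word is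
tall, so some nonterminal repeats along a path inside a subtree of height at most
`#rules + 1`; iterating the part between the two occurrences pumps, and cutting it out would
give a smaller parse tree if nothing were pumped.
-/

/-- `IsShuffle x y z` means `z` is an interleaving of `x` and `y`, preserving
the relative order of the letters of each; i.e. `z ∈ x ∐ y` (ordinary shuffle). -/
inductive IsShuffle {α : Type*} : List α → List α → List α → Prop
  | nil : IsShuffle [] [] []
  | left {x y z : List α} (a : α) : IsShuffle x y z → IsShuffle (a :: x) y (a :: z)
  | right {x y z : List α} (a : α) : IsShuffle x y z → IsShuffle x (a :: y) (a :: z)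

/-- The ordinary shuffle of two languages: the union of all shuffles of pairs. -/
def langShuffle {α : Type*} (L₁ L₂ : Language α) : Language α :=
  {z | ∃ x ∈ L₁, ∃ y ∈ L₂, IsShuffle x y z}

universe u v

inductive ParseTree (T : Type u) (N : Type v) : Type (max u v)
  | leaf (t : T)
  | node (A : N) (ts : List (ParseTree T N))

namespace ParseTree

variable {T : Type u} {N : Type v}

@[simp] def root : ParseTree T N → Symbol T N
  | leaf t => .terminal t
  | node A _ => .nonterminal A

@[simp] def yield : ParseTree T N → List T
  | leaf t => [t]
  | node _ ts => (ts.map yield).flatten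

@[simp] def size : ParseTree T N → ℕ
  | leaf _ => 1
  | node _ ts => (ts.map size).sum + 1

@[simp] def height : ParseTree T N → ℕ
  | leaf _ => 0
  | node _ ts => (ts.map height).foldr max 0 + 1

lemma exists_mem_height_node_eq {A : N} {ts : List (ParseTree T N)} (hts : ts ≠ []) :
    ∃ c ∈ ts, (node A ts).height = c.height + 1 := by
  have hmax := List.foldr_max_of_ne_nil (l := ts.map height) (by simpa using hts)
  obtain ⟨c, hc, hceq⟩ := List.mem_map.mp (List.maximum_mem hmax.symm)
  exact ⟨c, hc, by simp only [height, hceq]; rfl⟩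

lemma size_lt_size_node {A : N} {c : ParseTree T N} {ts : List (ParseTree T N)} (hc : c ∈ ts) :
    c.size < (node A ts).size := by
  rw [size]
  exact Nat.lt_succ_of_le (List.le_sum_of_mem (List.mem_map_of_mem hc))

/-- `Occurs t u s z`: `s` is a subtree of `t`, and `u`, `z` are the parts of the yield of `t`
to the left and to the right of it. -/
inductive Occurs : ParseTree T N → List T → ParseTree T N → List T → Prop
  | refl (t : ParseTree T N) : Occurs t [] t []
  | node {A : N} {l r : List (ParseTree T N)} {c s : ParseTree T N} {u z : List T} :
      Occurs c u s z →
      Occurs (node A (l ++ c :: r)) ((l.map yield).flatten ++ u) s (z ++ (r.map yield).flatten)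

namespace Occurs

variable {t s : ParseTree T N} {u z : List T}

lemma yield_eq (h : Occurs t u s z) : t.yield = u ++ s.yield ++ z := by
  induction h with
  | refl => simp
  | node _ ih => simp [ih]

lemma size_le (h : Occurs t u s z) : s.size ≤ t.size := by
  induction h with
  | refl => rfl
  | node _ ih => exact ih.trans (size_lt_size_node (by simp)).le

end Occurs

def RepeatsRoot (s : ParseTree T N) : Prop :=
  ∃ v s' y, Occurs s v s' y ∧ s'.size < s.size ∧ s'.root = s.root

end ParseTree

namespace ContextFreeGrammar

open ParseTree

variable {T : Type u} {g : ContextFreeGrammar T}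

lemma Derives.append {p p' q q' : List (Symbol T g.NT)} (hp : g.Derives p p')
    (hq : g.Derives q q') : g.Derives (p ++ q) (p' ++ q') :=
  (hp.append_right q).trans (hq.append_left p')

lemma derives_of_mem_rules {A : g.NT} {out : List (Symbol T g.NT)} (h : ⟨A, out⟩ ∈ g.rules) :
    g.Derives [.nonterminal A] out :=
  Produces.single ⟨_, h, ContextFreeRule.Rewrites.input_output⟩

lemma Derives.iterate {a : Symbol T g.NT} {p q : List (Symbol T g.NT)}
    (h : g.Derives [a] (p ++ [a] ++ q)) (i : ℕ) :
    g.Derives [a] ((List.replicate i p).flatten ++ [a] ++ (List.replicate i q).flatten) := by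
  induction i with
  | zero => exact Derives.refl _
  | succ i ih =>
    have := ih.trans (((Derives.refl _).append h).append (Derives.refl _))
    rw [List.replicate_succ', List.replicate_succ]
    simpa using this

variable (g) in
inductive IsParseTree : ParseTree T g.NT → Prop
  | leaf (t : T) : IsParseTree (.leaf t)
  | node {A : g.NT} {ts : List (ParseTree T g.NT)} :
      ⟨A, ts.map root⟩ ∈ g.rules → (∀ c ∈ ts, IsParseTree c) → IsParseTree (.node A ts)

lemma derives_map_root {ts : List (ParseTree T g.NT)}
    (h : ∀ c ∈ ts, g.Derives [c.root] (c.yield.map .terminal)) :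
    g.Derives (ts.map root) ((ts.map yield).flatten.map .terminal) := by
  induction ts with
  | nil => exact Derives.refl []
  | cons c ts ih =>
    simpa using Derives.append (h c (by simp)) (ih fun c hc => h c (by simp [hc]))

lemma IsParseTree.derives {t : ParseTree T g.NT} (ht : g.IsParseTree t) :
    g.Derives [t.root] (t.yield.map .terminal) := by
  induction ht with
  | leaf => simpa using Derives.refl _
  | node hrule _ ih => simpa using (derives_of_mem_rules hrule).trans (derives_map_root ih)

lemma exists_isParseTree_of_derives {u : List (Symbol T g.NT)} {w : List T}
    (h : g.Derives u (w.map .terminal)) :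
    ∃ ts : List (ParseTree T g.NT), (∀ c ∈ ts, g.IsParseTree c) ∧
      ts.map root = u ∧ (ts.map yield).flatten = w := by
  induction h using Relation.ReflTransGen.head_induction_on with
  | refl =>
    refine ⟨w.map leaf, ?_, by simp [Function.comp_def],
      by simp [Function.comp_def, ← List.flatMap_def]⟩
    simp only [List.mem_map]
    rintro _ ⟨t, -, rfl⟩
    exact IsParseTree.leaf t
  | head hprod _ ih =>
    obtain ⟨ts, hvalid, hroot, hyield⟩ := ih
    obtain ⟨r, hr, hrw⟩ := hprod
    obtain ⟨p, q, rfl, rfl⟩ := hrw.exists_parts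
    obtain ⟨ts₁₂, ts₃, rfl, h₁₂, rfl⟩ := List.map_eq_append_iff.mp hroot
    obtain ⟨ts₁, ts₂, rfl, rfl, hts₂⟩ := List.map_eq_append_iff.mp h₁₂
    refine ⟨ts₁ ++ [.node r.input ts₂] ++ ts₃, ?_, by simp, by simpa using hyield⟩
    simp only [List.mem_append, List.mem_singleton]
    rintro c ((hc | rfl) | hc)
    · exact hvalid c (by simp [hc])
    · exact .node (by rwa [hts₂]) fun c hc => hvalid c (by simp [hc])
    · exact hvalid c (by simp [hc])

lemma exists_isParseTree_of_mem_language {w : List T} (hw : w ∈ g.language) :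
    ∃ t, g.IsParseTree t ∧ t.root = .nonterminal g.initial ∧ t.yield = w := by
  obtain ⟨ts, hvalid, hroot, hyield⟩ := exists_isParseTree_of_derives hw
  obtain ⟨t, rfl⟩ : ∃ t, ts = [t] := List.map_eq_singleton_iff.mp hroot |>.imp fun _ h => h.1
  exact ⟨t, hvalid t (by simp), by simpa using hroot, by simpa using hyield⟩

namespace IsParseTree

variable {t s : ParseTree T g.NT} {u z : List T}

lemma of_occurs (ht : g.IsParseTree t) (h : Occurs t u s z) : g.IsParseTree s := by
  induction h with
  | refl => exact ht
  | node _ ih =>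
    cases ht with
    | node _ hts => exact ih (hts _ (by simp))

lemma derives_of_occurs (ht : g.IsParseTree t) (h : Occurs t u s z) :
    g.Derives [t.root] (u.map .terminal ++ [s.root] ++ z.map .terminal) := by
  induction h with
  | refl => simpa using Derives.refl _
  | @node A l r c s u z _ ih =>
    cases ht with
    | node hrule hts =>
      have hl := derives_map_root (ts := l) fun d hd => (hts d (by simp [hd])).derives
      have hr := derives_map_root (ts := r) fun d hd => (hts d (by simp [hd])).derives
      have hc := ih (hts c (by simp))
      have hchildren := hl.append (hc.append hr)
      rw [List.singleton_append, ← List.map_cons, ← List.map_append] at hchildren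
      simpa using (derives_of_mem_rules hrule).trans hchildren

lemma exists_replace (ht : g.IsParseTree t) (h : Occurs t u s z) {s' : ParseTree T g.NT}
    (hs' : g.IsParseTree s') (hroot : s'.root = s.root) :
    ∃ t', g.IsParseTree t' ∧ t'.root = t.root ∧ t'.yield = u ++ s'.yield ++ z ∧
      t'.size + s.size = t.size + s'.size := by
  induction h with
  | refl => exact ⟨s', hs', hroot, by simp, by omega⟩
  | @node A l r c s u z _ ih =>
    cases ht with
    | node hrule hts =>
      obtain ⟨c', hc', hroot', hyield', hsize'⟩ := ih (hts c (by simp)) hroot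
      have hrule' : ⟨A, (l ++ c' :: r).map root⟩ ∈ g.rules := by
        rwa [List.map_append, List.map_cons, hroot', ← List.map_cons, ← List.map_append]
      refine ⟨.node A (l ++ c' :: r), .node hrule' ?_, rfl,
        by simp [hyield'], by simp; omega⟩
      simp only [List.mem_append, List.mem_cons]
      rintro d (hd | rfl | hd)
      · exact hts d (by simp [hd])
      · exact hc'
      · exact hts d (by simp [hd])

lemma length_yield_le {M : ℕ} (hM : 1 ≤ M) (hrules : ∀ r ∈ g.rules, r.output.length ≤ M)
    (ht : g.IsParseTree t) : t.yield.length ≤ M ^ t.height := by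
  induction ht with
  | leaf => simp
  | @node A ts hrule _ ih =>
    set h := (ts.map height).foldr max 0
    have hchild : ∀ n ∈ ts.map (List.length ∘ yield), n ≤ M ^ h := by
      simp only [List.mem_map, Function.comp_apply]
      rintro _ ⟨c, hc, rfl⟩
      exact (ih c hc).trans <| Nat.pow_le_pow_right hM <|
        List.le_max_of_le (List.mem_map_of_mem hc) le_rfl
    calc (ParseTree.node A ts).yield.length = (ts.map (List.length ∘ yield)).sum := by simp
      _ ≤ ts.length * M ^ h := by simpa using List.sum_le_card_nsmul _ _ hchild
      _ ≤ M * M ^ h := Nat.mul_le_mul_right _ (by simpa using hrules _ hrule)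
      _ = M ^ (ParseTree.node A ts).height := by simp [h, pow_succ, mul_comm]

lemma exists_mem_rules_of_root_eq {s : ParseTree T g.NT} {A : g.NT}
    (hs : g.IsParseTree s) (hroot : s.root = .nonterminal A) : ∃ r ∈ g.rules, r.input = A := by
  cases hs with
  | leaf => simp at hroot
  | node hrule => exact ⟨_, hrule, by simpa using hroot⟩

lemma length_le_card_rules {t : ParseTree T g.NT} (ht : g.IsParseTree t)
    {ls : List g.NT} (hnd : ls.Nodup)
    (hocc : ∀ A ∈ ls, ∃ u s z, Occurs t u s z ∧ s.root = .nonterminal A) :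
    ls.length ≤ g.rules.card := by
  classical
  have hsub : ls.toFinset ⊆ g.rules.image ContextFreeRule.input := by
    intro A hA
    obtain ⟨u, s, z, hs, hroot⟩ := hocc A (List.mem_toFinset.mp hA)
    exact Finset.mem_image.mpr ((ht.of_occurs hs).exists_mem_rules_of_root_eq hroot)
  rw [← List.toFinset_card_of_nodup hnd]
  exact (Finset.card_le_card hsub).trans Finset.card_image_le

lemma exists_repeatsRoot_or_nodup {t : ParseTree T g.NT} (ht : g.IsParseTree t) :
    (∃ u s z, Occurs t u s z ∧ s.height ≤ g.rules.card + 1 ∧ s.RepeatsRoot) ∨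
    ∃ ls : List g.NT, ls.Nodup ∧ t.height ≤ ls.length ∧
      ∀ A ∈ ls, ∃ u s z, Occurs t u s z ∧ s.root = .nonterminal A := by
  induction ht with
  | leaf => exact .inr ⟨[], List.nodup_nil, by simp, by simp⟩
  | @node A ts hrule hts ih =>
    by_cases hrep : ∃ c ∈ ts,
        ∃ u s z, Occurs c u s z ∧ s.height ≤ g.rules.card + 1 ∧ s.RepeatsRoot
    · obtain ⟨c, hc, u, s, z, hs, hheight, hrep⟩ := hrep
      obtain ⟨l, r, rfl⟩ := List.append_of_mem hc
      exact .inl ⟨_, s, _, hs.node, hheight, hrep⟩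
    rcases eq_or_ne ts [] with rfl | hne
    · refine .inr ⟨[A], List.nodup_singleton A, by simp, fun B hB => ?_⟩
      exact ⟨[], _, [], .refl _, by simpa using (List.mem_singleton.mp hB).symm⟩
    obtain ⟨c, hc, hheight⟩ := exists_mem_height_node_eq (A := A) hne
    obtain ⟨ls, hnd, hlen, hocc⟩ :=
      (ih c hc).resolve_left fun h => hrep ⟨c, hc, h⟩
    obtain ⟨l, r, rfl⟩ := List.append_of_mem hc
    -- extend the chain of labels below a highest child by `A`, unless `A` already occurs on it
    by_cases hA : A ∈ ls
    · obtain ⟨v, s', y, hs', hroot⟩ := hocc A hA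
      have hcard := (hts c hc).length_le_card_rules hnd hocc
      refine .inl ⟨[], _, [], .refl _, by omega, _, s', _, hs'.node, ?_, hroot⟩
      exact lt_of_le_of_lt hs'.size_le (size_lt_size_node hc)
    · refine .inr ⟨A :: ls, hnd.cons hA, by rw [List.length_cons]; omega, fun B hB => ?_⟩
      rcases List.mem_cons.mp hB with rfl | hB
      · exact ⟨[], _, [], .refl _, rfl⟩
      · obtain ⟨u, s, z, hs, hroot⟩ := hocc B hB
        exact ⟨_, s, _, hs.node, hroot⟩

lemma exists_occurs_repeatsRoot {t : ParseTree T g.NT} (ht : g.IsParseTree t)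
    (hheight : g.rules.card < t.height) :
    ∃ u s z, Occurs t u s z ∧ s.height ≤ g.rules.card + 1 ∧ s.RepeatsRoot :=
  ht.exists_repeatsRoot_or_nodup.resolve_right fun ⟨_, hnd, hlen, hocc⟩ =>
    (hlen.trans (ht.length_le_card_rules hnd hocc)).not_gt hheight

lemma derives_pump {t s s' : ParseTree T g.NT} {u v y z : List T}
    (ht : g.IsParseTree t) (hs : Occurs t u s z) (hs' : Occurs s v s' y)
    (hroot : s'.root = s.root) (i : ℕ) :
    g.Derives [t.root] ((u ++ (List.replicate i v).flatten ++ s'.yield ++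
      (List.replicate i y).flatten ++ z).map .terminal) := by
  have hloop := (ht.of_occurs hs).derives_of_occurs hs'
  have hbase := ((ht.of_occurs hs).of_occurs hs').derives
  rw [hroot] at hloop hbase
  have hpump := (Derives.iterate hloop i).trans
    (((Derives.refl _).append hbase).append (Derives.refl _))
  have := (ht.derives_of_occurs hs).trans (((Derives.refl _).append hpump).append (Derives.refl _))
  simpa [List.map_flatten, List.map_replicate] using this

end IsParseTree

lemma exists_isParseTree_minimal {w : List T} (hw : w ∈ g.language) :
    ∃ t, g.IsParseTree t ∧ t.root = .nonterminal g.initial ∧ t.yield = w ∧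
      ∀ t', g.IsParseTree t' → t'.root = .nonterminal g.initial → t'.yield = w →
        t.size ≤ t'.size := by
  obtain ⟨t, ⟨ht, hroot, hyield⟩, hmin⟩ := (measure size).wf.has_min
    {t | g.IsParseTree t ∧ t.root = .nonterminal g.initial ∧ t.yield = w}
    (exists_isParseTree_of_mem_language hw)
  exact ⟨t, ht, hroot, hyield, fun t' ht' hroot' hyield' =>
    not_lt.mp (hmin t' ⟨ht', hroot', hyield'⟩)⟩

end ContextFreeGrammar

open ContextFreeGrammar ParseTree in
theorem Language.IsContextFree.pumping {T : Type u} {L : Language T} (hL : L.IsContextFree) :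
    ∃ p, ∀ w ∈ L, p ≤ w.length → ∃ u v x y z : List T, w = u ++ v ++ x ++ y ++ z ∧
      (v ++ x ++ y).length ≤ p ∧ v ++ y ≠ [] ∧
      ∀ i, u ++ (List.replicate i v).flatten ++ x ++ (List.replicate i y).flatten ++ z ∈ L := by
  obtain ⟨g, rfl⟩ := hL
  set K := g.rules.card
  set M := max 2 (g.rules.sup fun r => r.output.length)
  have hrules : ∀ r ∈ g.rules, r.output.length ≤ M := fun r hr =>
    le_max_of_le_right (Finset.le_sup (f := fun r => r.output.length) hr)
  refine ⟨M ^ (K + 1), fun w hw hlen => ?_⟩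
  obtain ⟨t, ht, hroot, rfl, hmin⟩ := exists_isParseTree_minimal hw
  have hK : K < t.height :=
    (Nat.pow_le_pow_iff_right (by omega)).mp (hlen.trans (ht.length_yield_le (by omega) hrules))
  obtain ⟨u, s, z, hs, hheight, v, s', y, hs', hsize, hroot'⟩ := ht.exists_occurs_repeatsRoot hK
  refine ⟨u, v, s'.yield, y, z, by simp [hs.yield_eq, hs'.yield_eq], ?_, ?_, fun i => ?_⟩
  · calc (v ++ s'.yield ++ y).length = s.yield.length := by rw [hs'.yield_eq]
      _ ≤ M ^ s.height := (ht.of_occurs hs).length_yield_le (by omega) hrules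
      _ ≤ M ^ (K + 1) := Nat.pow_le_pow_right (by omega) hheight
  · rintro hvy
    obtain ⟨rfl, rfl⟩ := List.append_eq_nil_iff.mp hvy
    obtain ⟨t', ht', hroot'', hyield', hsize'⟩ :=
      ht.exists_replace hs ((ht.of_occurs hs).of_occurs hs') hroot'
    have := hmin t' ht' (hroot''.trans hroot) (by simp [hyield', hs.yield_eq, hs'.yield_eq])
    omega
  · rw [mem_language_iff, ← hroot]
    exact ht.derives_pump hs hs' hroot' i

namespace IsShuffle

variable {α : Type*} {x y z x' y' z' : List α}

lemma nil_right (x : List α) : IsShuffle x [] x := by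
  induction x with
  | nil => exact .nil
  | cons a x ih => exact .left a ih

lemma nil_left (y : List α) : IsShuffle [] y y := by
  induction y with
  | nil => exact .nil
  | cons a y ih => exact .right a ih

lemma append (h : IsShuffle x y z) (h' : IsShuffle x' y' z') :
    IsShuffle (x ++ x') (y ++ y') (z ++ z') := by
  induction h with
  | nil => exact h'
  | left a _ ih => exact .left a ih
  | right a _ ih => exact .right a ih

lemma count_eq [BEq α] [LawfulBEq α] (h : IsShuffle x y z) (a : α) :
    z.count a = x.count a + y.count a := by
  induction h with
  | nil => rfl
  | left b _ ih => simp only [List.count_cons, ih]; omega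
  | right b _ ih => simp only [List.count_cons, ih]; omega

end IsShuffle

lemma List.length_lt_of_append_eq_append {α : Type*} {r s t l₁ l₂ : List α} {a : α}
    (h : r ++ s ++ t = l₁ ++ l₂) (ha : a ∈ s) (ha' : a ∉ l₂) : r.length < l₁.length := by
  by_contra! hle
  have hdrop : s ++ t = (l₁ ++ l₂).drop r.length := by simp [← h]
  have hl₂ : l₂ = (l₁ ++ l₂).drop l₁.length := by simp
  exact ha' (hl₂ ▸ List.drop_subset_drop_left _ hle (hdrop ▸ List.mem_append_left t ha))

lemma List.IsInfix.length_lt_of_mem {α : Type*} {s l₁ m l₂ : List α} {a b : α}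
    (h : s <:+: l₁ ++ m ++ l₂) (ha : a ∈ s) (ha' : a ∉ m ++ l₂) (hb : b ∈ s)
    (hb' : b ∉ l₁ ++ m) : m.length < s.length := by
  obtain ⟨r, t, hrt⟩ := h
  have hr := List.length_lt_of_append_eq_append (hrt.trans (List.append_assoc _ _ _)) ha ha'
  have ht := List.length_lt_of_append_eq_append (s := s.reverse) (l₁ := l₂.reverse)
    (by simpa using congrArg List.reverse hrt) (List.mem_reverse.mpr hb)
    (by simpa [and_comm] using hb')
  have hlen := congrArg List.length hrt
  simp only [List.length_append, List.length_reverse] at hlen hr ht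
  omega

lemma count_eq_of_isShuffle {m n : ℕ} {z : List (Fin 4)}
    (h : IsShuffle (List.replicate m 0 ++ List.replicate m 1)
      (List.replicate n 2 ++ List.replicate n 3) z) :
    z.count 0 = z.count 1 ∧ z.count 2 = z.count 3 := by
  simp [h.count_eq, List.count_replicate]

lemma mem_and_mem_of_count_eq {D : List (Fin 4)} (hD : D ≠ []) (h01 : D.count 0 = D.count 1)
    (h23 : D.count 2 = D.count 3) : (0 ∈ D ∧ 1 ∈ D) ∨ (2 ∈ D ∧ 3 ∈ D) := by
  obtain ⟨ℓ, hℓ⟩ := List.exists_mem_of_ne_nil D hD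
  simp only [← List.count_pos_iff] at hℓ ⊢
  match ℓ with
  | 0 | 1 | 2 | 3 => omega

lemma length_lt_of_isInfix_blocks {n : ℕ} {s : List (Fin 4)}
    (h : s <:+: List.replicate n 0 ++ List.replicate n 2 ++ List.replicate n 1 ++
      List.replicate n 3)
    (hs : (0 ∈ s ∧ 1 ∈ s) ∨ (2 ∈ s ∧ 3 ∈ s)) : n < s.length := by
  rcases hs with ⟨h0, h1⟩ | ⟨h2, h3⟩
  · rw [List.append_assoc] at h
    simpa using h.length_lt_of_mem h0 (by simp [List.mem_replicate]) h1
      (by simp [List.mem_replicate])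
  · simpa using h.length_lt_of_mem h2 (by simp [List.mem_replicate]) h3
      (by simp [List.mem_replicate])

/-- The letters `a, b, c, d` are `0, 1, 2, 3`. -/
theorem shuffle_anbn_cndn_not_contextFree :
    ¬ Language.IsContextFree (langShuffle
      {w : List (Fin 4) | ∃ m : ℕ, 1 ≤ m ∧ w = List.replicate m 0 ++ List.replicate m 1}
      {w : List (Fin 4) | ∃ n : ℕ, 1 ≤ n ∧ w = List.replicate n 2 ++ List.replicate n 3}) := by
  intro hCF
  obtain ⟨p, hp⟩ := hCF.pumping
  set N := p + 1
  set w : List (Fin 4) :=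
    List.replicate N 0 ++ List.replicate N 2 ++ List.replicate N 1 ++ List.replicate N 3
  have hw : IsShuffle (List.replicate N 0 ++ List.replicate N 1)
      (List.replicate N 2 ++ List.replicate N 3) w := by
    simpa [w] using ((IsShuffle.nil_right _).append (IsShuffle.nil_left _)).append
      ((IsShuffle.nil_right _).append (IsShuffle.nil_left (List.replicate N (3 : Fin 4))))
  obtain ⟨u, v, x, y, z, hdecomp, hlen, hne, hpump⟩ :=
    hp w ⟨_, ⟨N, by omega, rfl⟩, _, ⟨N, by omega, rfl⟩, hw⟩ (by simp [w]; omega)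
  obtain ⟨_, ⟨m, -, rfl⟩, _, ⟨n, -, rfl⟩, hw₂⟩ := hpump 2
  obtain ⟨h01, h23⟩ := count_eq_of_isShuffle hw
  obtain ⟨h01₂, h23₂⟩ := count_eq_of_isShuffle hw₂
  rw [hdecomp] at h01 h23
  simp only [List.count_append, List.replicate_succ, List.replicate_zero, List.flatten_cons,
    List.flatten_nil, List.append_nil] at h01 h23 h01₂ h23₂
  have hwindow := mem_and_mem_of_count_eq (D := v ++ y) hne
    (by simp only [List.count_append]; omega) (by simp only [List.count_append]; omega)
  have hinfix : v ++ x ++ y <:+: w := hdecomp ▸ ⟨u, z, by simp⟩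
  have := length_lt_of_isInfix_blocks hinfix (by simp only [List.mem_append] at hwindow ⊢; tauto)
  omega
end

section
/- If L₃ = {a^m b^{2m} : m ≥ 1} and L₄ = {a^{2n} b^n : n ≥ 1}, then the perfect shuffle L₃ ⧢ L₄ equals {a^{2n}(ba)^n b^{2n} : n ≥ 1}, and this language is not context-free. -/
/-- The perfect shuffle of two words: `pshuffle x y` alternates letters starting
with `x`, i.e. `x₁ y₁ x₂ y₂ ⋯`. -/
def pshuffle {α : Type*} : List α → List α → List α
  | [], ys => ys
  | a :: xs, ys => a :: pshuffle ys xs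
termination_by x y => x.length + y.length
decreasing_by simp [Nat.lt_succ_iff]; omega

/-- The perfect shuffle of two languages: the union of `x ⧢ y` over all pairs
of words of equal length, with `x` from the first and `y` from the second. -/
def langPshuffle {α : Type*} (L₁ L₂ : Language α) : Language α :=
  {z | ∃ x ∈ L₁, ∃ y ∈ L₂, x.length = y.length ∧ z = pshuffle x y}

/-!
The words of `L₃` and `L₄` that can be shuffled have the same index `m`, and the shuffle is
computed blockwise: `aᵐ ⧢ aᵐ = a²ᵐ`, `bᵐ ⧢ aᵐ = (ba)ᵐ`, `bᵐ ⧢ bᵐ = b²ᵐ`.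

Non-context-freeness follows from the pumping lemma, proved without normal forms: descending a
parse tree along a longest child and keeping only the levels whose siblings yield a nonempty
word, each kept level shrinks the yield by at most the factor `fanout + 1`, so a long word has a
long chain of nested derivations `A ⇒* uBz` with `uz ≠ ε`, in which some `B` repeats. For
`a²ⁿ(ba)ⁿb²ⁿ = uvxyz`, the pumped words for `i = 1, 2` lie in the language and have different
lengths, yet they share a statistic that determines `n`: the leading run of `a`s if `uv`
contains a `b`, the trailing run of `b`s if `yz` contains an `a`, and otherwise the number of
`a`s after the leading run, which then depends on `x` alone.
-/

section PerfectShuffle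

variable {α : Type*}

@[simp] lemma pshuffle_nil_left (y : List α) : pshuffle [] y = y := by
  rw [pshuffle]

@[simp] lemma pshuffle_cons_cons (a b : α) (x y : List α) :
    pshuffle (a :: x) (b :: y) = a :: b :: pshuffle x y := by
  rw [pshuffle, pshuffle]

lemma pshuffle_append {x₁ y₁ : List α} (h : x₁.length = y₁.length) (x₂ y₂ : List α) :
    pshuffle (x₁ ++ x₂) (y₁ ++ y₂) = pshuffle x₁ y₁ ++ pshuffle x₂ y₂ := by
  induction x₁ generalizing y₁ with
  | nil => simp [List.eq_nil_of_length_eq_zero h.symm]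
  | cons a x₁ ih =>
    obtain ⟨b, y₁, rfl⟩ := List.exists_cons_of_length_eq_add_one h.symm
    simp [ih (Nat.succ.inj h)]

lemma pshuffle_replicate (n : ℕ) (a b : α) :
    pshuffle (List.replicate n a) (List.replicate n b) = (List.replicate n [a, b]).flatten := by
  induction n with
  | zero => simp
  | succ n ih => simp [List.replicate_succ, ih]

lemma pshuffle_replicate_append (a b : α) (n : ℕ) :
    pshuffle (List.replicate n a ++ List.replicate (2 * n) b)
        (List.replicate (2 * n) a ++ List.replicate n b) =
      List.replicate (2 * n) a ++ (List.replicate n [b, a]).flatten ++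
        List.replicate (2 * n) b := by
  simp only [two_mul, List.replicate_add, ← List.append_assoc]
  rw [pshuffle_append (by simp), List.append_assoc, pshuffle_append (by simp),
    pshuffle_replicate, pshuffle_replicate, pshuffle_replicate]
  have hpair (c : α) : (List.replicate n [c, c]).flatten = List.replicate (n + n) c := by
    rw [show [c, c] = List.replicate 2 c from rfl, List.flatten_replicate_replicate, ← two_mul,
      mul_comm]
  simp [hpair]

end PerfectShuffle

namespace ContextFreeGrammar

variable {T : Type*} {g : ContextFreeGrammar T}

/-- Parse trees as an inductive predicate: `cs` pairs each symbol on the right-hand side of the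
rule with the word it yields. -/
inductive Yields (g : ContextFreeGrammar T) : Symbol T g.NT → List T → Prop
  | terminal (t : T) : g.Yields (.terminal t) [t]
  | nonterminal {r : ContextFreeRule T g.NT} (hr : r ∈ g.rules)
      (cs : List (Symbol T g.NT × List T)) (hcs : cs.map Prod.fst = r.output)
      (h : ∀ c ∈ cs, g.Yields c.1 c.2) :
      g.Yields (.nonterminal r.input) (cs.map Prod.snd).flatten

lemma Derives.append_s4 {α β γ δ : List (Symbol T g.NT)} (h₁ : g.Derives α β)
    (h₂ : g.Derives γ δ) : g.Derives (α ++ γ) (β ++ δ) :=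
  (h₁.append_right γ).trans (h₂.append_left β)

lemma derives_map_fst {cs : List (Symbol T g.NT × List T)}
    (h : ∀ c ∈ cs, g.Derives [c.1] (c.2.map .terminal)) :
    g.Derives (cs.map Prod.fst) ((cs.map Prod.snd).flatten.map .terminal) := by
  induction cs with
  | nil => exact .refl _
  | cons c cs ih => simpa using (h c (by simp)).append_s4 (ih fun d hd => h d (by simp [hd]))

lemma Yields.derives {s : Symbol T g.NT} {w : List T} (h : g.Yields s w) :
    g.Derives [s] (w.map .terminal) := by
  induction h with
  | terminal t => exact .refl _
  | nonterminal hr cs hcs _ ih =>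
    refine Produces.trans_derives ⟨_, hr, ?_⟩ (derives_map_fst ih)
    rw [hcs]
    exact ContextFreeRule.Rewrites.input_output

lemma exists_context_of_mem {r : ContextFreeRule T g.NT} (hr : r ∈ g.rules)
    {cs : List (Symbol T g.NT × List T)} (hcs : cs.map Prod.fst = r.output)
    (h : ∀ c ∈ cs, g.Yields c.1 c.2) {c : Symbol T g.NT × List T} (hc : c ∈ cs) :
    ∃ u z : List T, (cs.map Prod.snd).flatten = u ++ c.2 ++ z ∧
      g.Derives [.nonterminal r.input] (u.map .terminal ++ [c.1] ++ z.map .terminal) := by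
  obtain ⟨l, l', rfl⟩ := List.append_of_mem hc
  refine ⟨(l.map Prod.snd).flatten, (l'.map Prod.snd).flatten, by simp, ?_⟩
  have hl := derives_map_fst fun d hd => (h d (List.mem_append_left _ hd)).derives
  have hl' := derives_map_fst fun d hd => (h d (List.mem_append_right _ (.tail _ hd))).derives
  refine Produces.trans_derives ⟨_, hr, ContextFreeRule.Rewrites.input_output⟩ ?_
  rw [← hcs, List.map_append, List.map_cons, ← List.singleton_append, ← List.append_assoc]
  exact (hl.append_s4 (.refl _)).append_s4 hl'

lemma exists_yields_of_derives {α : List (Symbol T g.NT)} {w : List T}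
    (h : g.Derives α (w.map .terminal)) :
    ∃ cs : List (Symbol T g.NT × List T), cs.map Prod.fst = α ∧
      (cs.map Prod.snd).flatten = w ∧ ∀ c ∈ cs, g.Yields c.1 c.2 := by
  induction h using Relation.ReflTransGen.head_induction_on with
  | refl =>
    refine ⟨w.map fun t => (.terminal t, [t]), by simp,
      by simp [Function.comp_def, ← List.flatMap_def], ?_⟩
    simp only [List.mem_map]
    rintro _ ⟨t, -, rfl⟩
    exact .terminal t
  | head hprod _ ih =>
    obtain ⟨cs, hcs, rfl, hy⟩ := ih
    obtain ⟨r, hr, hrw⟩ := hprod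
    obtain ⟨p, q, rfl, rfl⟩ := hrw.exists_parts
    obtain ⟨cs₁₂, cs₃, rfl, h₁₂, rfl⟩ := List.map_eq_append_iff.1 hcs
    obtain ⟨cs₁, cs₂, rfl, rfl, h₂⟩ := List.map_eq_append_iff.1 h₁₂
    refine ⟨cs₁ ++ (.nonterminal r.input, (cs₂.map Prod.snd).flatten) :: cs₃,
      by simp, by simp, fun c hc => ?_⟩
    simp only [List.mem_append, List.mem_cons] at hc
    rcases hc with hc | rfl | hc
    · exact hy c (by simp [hc])
    · exact .nonterminal hr cs₂ h₂ fun c hc => hy c (by simp [hc])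
    · exact hy c (by simp [hc])

lemma yields_of_derives {s : Symbol T g.NT} {w : List T}
    (h : g.Derives [s] (w.map .terminal)) : g.Yields s w := by
  obtain ⟨cs, hcs, rfl, hy⟩ := exists_yields_of_derives h
  obtain ⟨c, rfl, rfl⟩ := List.map_eq_singleton_iff.1 hcs
  simpa using hy c (by simp)

lemma derives_replicate {B : g.NT} {p q : List (Symbol T g.NT)}
    (h : g.Derives [.nonterminal B] (p ++ [.nonterminal B] ++ q)) (i : ℕ) :
    g.Derives [.nonterminal B]
      ((List.replicate i p).flatten ++ [.nonterminal B] ++ (List.replicate i q).flatten) := by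
  induction i with
  | zero => exact .refl _
  | succ i ih =>
    rw [List.replicate_succ, List.replicate_succ', List.flatten_cons, List.flatten_append]
    simpa using h.trans (((Derives.refl p).append_s4 ih).append_s4 (.refl q))

inductive StrictChain (g : ContextFreeGrammar T) : g.NT → List T → List g.NT → Prop
  | nil {A : g.NT} {w : List T} (h : g.Derives [.nonterminal A] (w.map .terminal)) :
      g.StrictChain A w []
  | cons {A B : g.NT} {u w z : List T} {Bs : List g.NT}
      (h : g.Derives [.nonterminal A] (u.map .terminal ++ [.nonterminal B] ++ z.map .terminal))
      (huz : u ++ z ≠ []) (hB : g.StrictChain B w Bs) :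
      g.StrictChain A (u ++ w ++ z) (B :: Bs)

namespace StrictChain

variable {A B : g.NT} {w : List T} {Bs : List g.NT}

lemma derives (h : g.StrictChain A w Bs) : g.Derives [.nonterminal A] (w.map .terminal) := by
  induction h with
  | nil h => exact h
  | cons h _ _ ih => simpa using h.trans (((Derives.refl _).append_s4 ih).append_s4 (.refl _))

lemma of_derives_nonterminal (hAB : g.Derives [.nonterminal A] [.nonterminal B])
    (h : g.StrictChain B w Bs) : g.StrictChain A w Bs := by
  cases h with
  | nil h => exact .nil (hAB.trans h)
  | cons h huz hB => exact .cons (hAB.trans h) huz hB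

lemma split {Bs₁ Bs₂ : List g.NT} (h : g.StrictChain A w (Bs₁ ++ B :: Bs₂)) :
    ∃ u w' z : List T, w = u ++ w' ++ z ∧ u ++ z ≠ [] ∧
      g.Derives [.nonterminal A] (u.map .terminal ++ [.nonterminal B] ++ z.map .terminal) ∧
      g.StrictChain B w' Bs₂ := by
  induction Bs₁ generalizing A w with
  | nil => cases h with | cons h huz hB => exact ⟨_, _, _, rfl, huz, h, hB⟩
  | cons C Cs ih =>
    cases h with
    | @cons _ _ u₀ _ z₀ _ h huz hC =>
      obtain ⟨u, w', z, rfl, -, hCB, hB⟩ := ih hC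
      refine ⟨u₀ ++ u, w', z ++ z₀, by simp, by simp_all, ?_, hB⟩
      simpa using h.trans (((Derives.refl _).append_s4 hCB).append_s4 (.refl _))

lemma exists_pump (h : g.StrictChain A w Bs) (hBs : ¬Bs.Nodup) :
    ∃ u v x y z : List T, w = u ++ v ++ x ++ y ++ z ∧ v ++ y ≠ [] ∧ ∀ i : ℕ,
      g.Derives [.nonterminal A] ((u ++ (List.replicate i v).flatten ++ x ++
        (List.replicate i y).flatten ++ z).map .terminal) := by
  obtain ⟨B, hBB⟩ : ∃ B, List.Sublist [B, B] Bs := by simpa [List.nodup_iff_sublist] using hBs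
  obtain ⟨r₁, r₂, rfl, h₁, h₂⟩ := List.cons_sublist_iff.1 hBB
  obtain ⟨l₁, l₂, rfl⟩ := List.append_of_mem h₁
  obtain ⟨l₃, l₄, rfl⟩ := List.append_of_mem (List.singleton_sublist.1 h₂)
  rw [show l₁ ++ B :: l₂ ++ (l₃ ++ B :: l₄) = l₁ ++ B :: (l₂ ++ l₃ ++ B :: l₄) by simp] at h
  obtain ⟨u, w', z, rfl, -, hu, hB⟩ := h.split
  obtain ⟨v, x, y, rfl, hvy, hv, hx⟩ := hB.split (Bs₁ := l₂ ++ l₃)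
  refine ⟨u, v, x, y, z, by simp, hvy, fun i => ?_⟩
  have hBx := (derives_replicate hv i).trans (((Derives.refl _).append_s4 hx.derives).append_s4 (.refl _))
  simpa [List.map_flatten, List.map_replicate] using
    hu.trans (((Derives.refl _).append_s4 hBx).append_s4 (.refl _))

end StrictChain

def fanout (g : ContextFreeGrammar T) : ℕ := g.rules.sup fun r => r.output.length

lemma exists_long_child {r : ContextFreeRule T g.NT} (hr : r ∈ g.rules)
    {cs : List (Symbol T g.NT × List T)} (hcs : cs.map Prod.fst = r.output) {n : ℕ}
    (hn : g.fanout * n < (cs.map Prod.snd).flatten.length) : ∃ c ∈ cs, n < c.2.length := by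
  by_contra! hshort
  have hlen : cs.length ≤ g.fanout := by
    rw [← List.length_map (f := Prod.fst), hcs]
    exact Finset.le_sup (f := fun r => r.output.length) hr
  have hsum := List.sum_le_card_nsmul ((cs.map Prod.snd).map List.length) n (by
    simp only [List.map_map, List.mem_map]
    rintro _ ⟨c, hc, rfl⟩
    exact hshort c hc)
  simp only [List.length_flatten, List.length_map, smul_eq_mul] at hn hsum
  nlinarith

theorem Yields.exists_strictChain {s : Symbol T g.NT} {w : List T} (h : g.Yields s w) (d : ℕ)
    (hw : (g.fanout + 1) ^ d < w.length) :
    ∃ r ∈ g.rules, ∃ Bs : List g.NT, s = .nonterminal r.input ∧ Bs.length = d ∧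
      (∀ B ∈ Bs, ∃ r ∈ g.rules, r.input = B) ∧ g.StrictChain r.input w Bs := by
  induction h generalizing d with
  | terminal t =>
    -- the base `fanout + 1` is positive, so a leaf is never long
    exact absurd hw (not_lt.2 (Nat.one_le_pow _ _ (Nat.succ_pos _)))
  | @nonterminal r hr cs hcs hy ih =>
    cases d with
    | zero => exact ⟨r, hr, [], rfl, rfl, by simp, .nil (Yields.nonterminal hr cs hcs hy).derives⟩
    | succ d =>
      obtain ⟨c, hc, hlong⟩ := exists_long_child hr hcs (n := (g.fanout + 1) ^ d) <|
        calc g.fanout * (g.fanout + 1) ^ d ≤ (g.fanout + 1) ^ (d + 1) := by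
              rw [pow_succ']; exact Nat.mul_le_mul_right _ (Nat.le_succ _)
          _ < _ := hw
      obtain ⟨u, z, hw', hder⟩ := exists_context_of_mem hr hcs hy hc
      by_cases huz : u ++ z = []
      · -- the siblings of `c` yield nothing: skip this level, keeping `d + 1`
        obtain ⟨rfl, rfl⟩ := List.append_eq_nil_iff.1 huz
        simp only [List.nil_append, List.append_nil, List.map_nil] at hw' hder
        obtain ⟨r', -, Bs, hc₁, hlen, hBs, hch⟩ := ih c hc (d + 1) (hw' ▸ hw)
        rw [hc₁] at hder
        exact ⟨r, hr, Bs, rfl, hlen, hBs, hw' ▸ hch.of_derives_nonterminal hder⟩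
      · obtain ⟨r', hr', Bs, hc₁, hlen, hBs, hch⟩ := ih c hc d hlong
        rw [hc₁] at hder
        refine ⟨r, hr, r'.input :: Bs, rfl, by simp [hlen], ?_, hw' ▸ .cons hder huz hch⟩
        simpa [or_imp, forall_and] using ⟨⟨r', hr', rfl⟩, hBs⟩

theorem _root_.Language.IsContextFree.exists_pumping {L : Language T} (hL : L.IsContextFree) :
    ∃ k : ℕ, ∀ w ∈ L, k ≤ w.length → ∃ u v x y z : List T,
      w = u ++ v ++ x ++ y ++ z ∧ v ++ y ≠ [] ∧
      ∀ i : ℕ, u ++ (List.replicate i v).flatten ++ x ++ (List.replicate i y).flatten ++ z ∈ L := by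
  classical
  obtain ⟨g, rfl⟩ := hL
  set inputs := g.rules.image ContextFreeRule.input
  refine ⟨(g.fanout + 1) ^ (inputs.card + 1) + 1, fun w hw hk => ?_⟩
  obtain ⟨r, -, Bs, hS, hlen, hBs, hch⟩ :=
    (yields_of_derives hw).exists_strictChain (inputs.card + 1) (by omega)
  have hdup : ¬Bs.Nodup := fun hnd => by
    have := Finset.card_le_card (s := Bs.toFinset) (t := inputs) fun B hB => by
      simpa [inputs] using hBs B (List.mem_toFinset.1 hB)
    rw [List.toFinset_card_of_nodup hnd] at this
    omega
  obtain ⟨u, v, x, y, z, hsplit, hvy, hpump⟩ := hch.exists_pump hdup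
  refine ⟨u, v, x, y, z, hsplit, hvy, fun i => ?_⟩
  rw [mem_language_iff, Symbol.nonterminal.inj hS]
  exact hpump i

end ContextFreeGrammar

lemma List.takeWhile_append_of_exists_not {α : Type*} {p : α → Bool} {l₁ l₂ : List α}
    (h : ∃ a ∈ l₁, ¬p a) : (l₁ ++ l₂).takeWhile p = l₁.takeWhile p := by
  rw [List.takeWhile_append, if_neg]
  intro hlen
  obtain ⟨a, ha, hpa⟩ := h
  exact hpa (List.mem_takeWhile_imp ((List.takeWhile_sublist p).eq_of_length hlen ▸ ha))

lemma List.count_dropWhile_append {α : Type*} [BEq α] {p : α → Bool} {a : α} {l₁ l₂ : List α}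
    (h : l₂.count a = 0) : ((l₁ ++ l₂).dropWhile p).count a = (l₁.dropWhile p).count a := by
  rw [List.dropWhile_append]
  split
  · rename_i hnil
    rw [List.isEmpty_iff.1 hnil, List.count_nil]
    exact Nat.eq_zero_of_le_zero (h ▸ (List.dropWhile_sublist p).count_le a)
  · rw [List.count_append, h, add_zero]

def shuffleWord (n : ℕ) : List (Fin 2) :=
  List.replicate (2 * n) 0 ++ (List.replicate n [1, 0]).flatten ++ List.replicate (2 * n) 1

lemma length_shuffleWord (n : ℕ) : (shuffleWord n).length = 6 * n := by
  simp [shuffleWord]; omega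

lemma takeWhile_shuffleWord (n : ℕ) :
    (shuffleWord n).takeWhile (· == 0) = List.replicate (2 * n) 0 := by
  cases n <;> simp [shuffleWord, List.replicate_succ]

lemma takeWhile_reverse_shuffleWord (n : ℕ) :
    (shuffleWord n).reverse.takeWhile (· == 1) = List.replicate (2 * n) 1 := by
  simp only [shuffleWord, List.reverse_append, List.reverse_replicate, List.reverse_flatten,
    List.map_replicate, List.reverse_cons, List.reverse_nil]
  cases n <;> simp [List.replicate_succ]

lemma count_dropWhile_shuffleWord (n : ℕ) :
    ((shuffleWord n).dropWhile (· == 0)).count 0 = n := by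
  cases n <;> simp [shuffleWord, List.replicate_succ, List.count_flatten, List.count_replicate]

lemma two_mul_eq_takeWhile_of_prefix {n : ℕ} {l r : List (Fin 2)} (h : l ++ r = shuffleWord n)
    (hl : ∃ c ∈ l, c ≠ 0) : 2 * n = (l.takeWhile (· == 0)).length := by
  have := congrArg (·.takeWhile (· == 0)) h
  simp only [takeWhile_shuffleWord] at this
  rw [List.takeWhile_append_of_exists_not (by simpa using hl)] at this
  simp [this]

lemma two_mul_eq_takeWhile_reverse_of_suffix {n : ℕ} {l r : List (Fin 2)}
    (h : r ++ l = shuffleWord n) (hl : ∃ c ∈ l, c ≠ 1) :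
    2 * n = (l.reverse.takeWhile (· == 1)).length := by
  have := congrArg (·.reverse.takeWhile (· == 1)) h
  simp only [takeWhile_reverse_shuffleWord, List.reverse_append] at this
  rw [List.takeWhile_append_of_exists_not (by simpa using hl)] at this
  simp [this]

lemma eq_count_dropWhile_of_infix {n : ℕ} {a l b : List (Fin 2)} (h : a ++ l ++ b = shuffleWord n)
    (ha : ∀ c ∈ a, c = 0) (hb : ∀ c ∈ b, c = 1) : n = (l.dropWhile (· == 0)).count 0 := by
  have := congrArg (fun w : List (Fin 2) => (w.dropWhile (· == 0)).count 0) h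
  simp only [count_dropWhile_shuffleWord, List.append_assoc] at this
  rw [List.dropWhile_append_of_pos (by simpa using ha), List.count_dropWhile_append] at this
  · exact this.symm
  · exact List.count_eq_zero.2 fun h0 => by simpa using hb 0 h0

theorem not_isContextFree_shuffleWord :
    ¬Language.IsContextFree {w : List (Fin 2) | ∃ n, 1 ≤ n ∧ w = shuffleWord n} := by
  intro hL
  obtain ⟨k, hk⟩ := hL.exists_pumping
  obtain ⟨u, v, x, y, z, -, hvy, hpump⟩ :=
    hk (shuffleWord (k + 1)) ⟨k + 1, by omega, rfl⟩ (by rw [length_shuffleWord]; omega)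
  obtain ⟨m₁, -, h₁⟩ := hpump 1
  obtain ⟨m₂, -, h₂⟩ := hpump 2
  simp only [List.replicate_succ, List.replicate_zero, List.flatten_cons, List.flatten_nil,
    List.append_nil] at h₁ h₂
  have hlt : m₁ < m₂ := by
    have e₁ := congrArg List.length h₁
    have e₂ := congrArg List.length h₂
    have := List.length_pos_iff.2 hvy
    simp only [List.length_append, length_shuffleWord] at e₁ e₂ this
    omega
  suffices m₁ = m₂ by omega
  by_cases hA : ∃ c ∈ u ++ v, c ≠ 0
  · have e₁ := two_mul_eq_takeWhile_of_prefix (r := x ++ y ++ z) (by simpa using h₁) hA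
    have e₂ := two_mul_eq_takeWhile_of_prefix (r := v ++ x ++ y ++ y ++ z) (by simpa using h₂) hA
    omega
  by_cases hB : ∃ c ∈ y ++ z, c ≠ 1
  · have e₁ := two_mul_eq_takeWhile_reverse_of_suffix (r := u ++ v ++ x) (by simpa using h₁) hB
    have e₂ := two_mul_eq_takeWhile_reverse_of_suffix (r := u ++ v ++ v ++ x ++ y)
      (by simpa using h₂) hB
    omega
  push Not at hA hB
  have e₁ := eq_count_dropWhile_of_infix (a := u ++ v) (b := y ++ z) (by simpa using h₁) hA hB
  have e₂ := eq_count_dropWhile_of_infix (a := u ++ v ++ v) (b := y ++ y ++ z)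
    (by simpa using h₂) (by simp_all) (by simp_all)
  omega

/-- Letters are encoded in `Fin 2` as `a = 0`, `b = 1`. -/
theorem pshuffle_L3_L4 :
    langPshuffle
        {w : List (Fin 2) | ∃ m : ℕ, 1 ≤ m ∧
          w = List.replicate m 0 ++ List.replicate (2 * m) 1}
        {w : List (Fin 2) | ∃ n : ℕ, 1 ≤ n ∧
          w = List.replicate (2 * n) 0 ++ List.replicate n 1} =
      {w : List (Fin 2) | ∃ n : ℕ, 1 ≤ n ∧
        w = List.replicate (2 * n) 0 ++ (List.replicate n [1, 0]).flatten ++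
            List.replicate (2 * n) 1} ∧
    ¬ Language.IsContextFree
      {w : List (Fin 2) | ∃ n : ℕ, 1 ≤ n ∧
        w = List.replicate (2 * n) 0 ++ (List.replicate n [1, 0]).flatten ++
            List.replicate (2 * n) 1} := by
  refine ⟨?_, not_isContextFree_shuffleWord⟩
  ext w
  constructor
  · rintro ⟨_, ⟨m, hm, rfl⟩, _, ⟨n, -, rfl⟩, hlen, rfl⟩
    obtain rfl : m = n := by simp at hlen; omega
    exact ⟨m, hm, pshuffle_replicate_append 0 1 m⟩
  · rintro ⟨n, hn, rfl⟩
    exact ⟨_, ⟨n, hn, rfl⟩, _, ⟨n, hn, rfl⟩, by simp; omega,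
      (pshuffle_replicate_append 0 1 n).symm⟩
end

section
/- If there exists a word x such that y ∈ x ∐ x^R, then y is an abelian square, i.e., y = uv with |u| = |v| and v a permutation (anagram) of u. -/
namespace IsShuffle

variable {α : Type*}

theorem perm {x y z : List α} (h : IsShuffle x y z) : z.Perm (x ++ y) := by
  induction h with
  | nil => rfl
  | left a _ ih => exact ih.cons a
  | right a _ ih => exact (ih.cons a).trans List.perm_middle.symm

theorem length_eq {x y z : List α} (h : IsShuffle x y z) :
    z.length = x.length + y.length := by
  simpa using h.perm.length_eq

theorem exists_of_append {z₁ z₂ : List α} :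
    ∀ {x y : List α}, IsShuffle x y (z₁ ++ z₂) →
      ∃ x₁ x₂ y₁ y₂, x = x₁ ++ x₂ ∧ y = y₁ ++ y₂ ∧
        IsShuffle x₁ y₁ z₁ ∧ IsShuffle x₂ y₂ z₂ := by
  induction z₁ with
  | nil => exact fun h => ⟨[], _, [], _, rfl, rfl, .nil, h⟩
  | cons a z₁ ih =>
    intro x y h
    cases h with
    | left _ h =>
      obtain ⟨x₁, x₂, y₁, y₂, rfl, rfl, h₁, h₂⟩ := ih h
      exact ⟨a :: x₁, x₂, y₁, y₂, rfl, rfl, .left a h₁, h₂⟩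
    | right _ h =>
      obtain ⟨x₁, x₂, y₁, y₂, rfl, rfl, h₁, h₂⟩ := ih h
      exact ⟨x₁, x₂, a :: y₁, y₂, rfl, rfl, .right a h₁, h₂⟩

end IsShuffle

theorem List.perm_append_reverse_swap {α : Type*} (l₁ l₂ : List α) :
    (l₁ ++ l₂.reverse).Perm (l₂ ++ l₁.reverse) :=
  ((reverse_perm l₂).append_left l₁).trans
    (perm_append_comm.trans ((reverse_perm l₁).symm.append_left l₂))

/-- If y is an interleaving of some word x with its reverse, then y is an
abelian square: y = uv with |u| = |v| and v a permutation of u. -/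
theorem shuffle_reverse_abelianSquare {α : Type*} (x y : List α)
    (h : IsShuffle x x.reverse y) :
    ∃ u v : List α, y = u ++ v ∧ u.length = v.length ∧ u.Perm v := by
  set n := x.length
  have hy : y.length = 2 * n := by simp [h.length_eq, n]; omega
  obtain ⟨x₁, x₂, y₁, y₂, hx, hxr, h₁, h₂⟩ :=
    IsShuffle.exists_of_append (z₁ := y.take n) (z₂ := y.drop n) (by rwa [y.take_append_drop])
  have hlen₁ : x₁.length + y₁.length = n := by
    rw [← h₁.length_eq, List.length_take, hy]; omega
  have hlen : x₂.reverse.length = y₁.length := by simp [n, hx] at hlen₁ ⊢; omega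
  obtain ⟨rfl, rfl⟩ := List.append_inj (by rw [← List.reverse_append, ← hx, hxr]) hlen
  refine ⟨_, _, (y.take_append_drop n).symm, by simp [hy]; omega, ?_⟩
  exact h₁.perm.trans ((x₁.perm_append_reverse_swap x₂).trans h₂.perm.symm)
end

section
/- If L is a regular language, then the language bdi(L) obtained by perfect-shuffling the first half of each word with its last half is regular. -/
/-- The inverse-decimation of a word: the perfect shuffle of its first half
with its last half (the last half getting the extra letter for odd lengths). -/
def bdi {α : Type*} (w : List α) : List α :=
  pshuffle (w.take (w.length / 2)) (w.drop (w.length / 2))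

/-! Fix a DFA `M` for `L`. A word `u ++ v` lies in `L` iff `v` is accepted from the state
`q = M.eval u`, so `bdi(L)` is the union, over the finitely many states `q`, of the perfect
shuffles of `{u | M.eval u = q}` with `M.acceptsFrom q` restricted to `|u| ≤ |v| ≤ |u| + 1`.
Such a balanced shuffle of two regular languages is recognised by an NFA running both DFAs on
alternate letters; the phase records whose turn it is, and the possible extra last letter of the
right word is guessed nondeterministically. -/

section Pshuffle

variable {α : Type*}

-- Proved jointly: each recursive call of `pshuffle` swaps its two arguments.
theorem pshuffle_append_singleton (x y : List α) (c : α) :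
    (x.length ≤ y.length + 1 → pshuffle x (y ++ [c]) = pshuffle x y ++ [c]) ∧
    (y.length ≤ x.length → pshuffle (x ++ [c]) y = pshuffle x y ++ [c]) := by
  induction x, y using pshuffle.induct with
  | case1 y =>
    refine ⟨fun _ => by simp only [pshuffle], fun h => ?_⟩
    rw [List.length_eq_zero_iff.1 (Nat.le_zero.1 h)]
    simp [pshuffle]
  | case2 a x y ih =>
    simp only [List.length_cons, List.cons_append, pshuffle]
    exact ⟨fun h => by rw [ih.2 (by omega)], fun h => by rw [ih.1 (by omega)]⟩

theorem pshuffle_append_singleton_right {x y : List α} (c : α) (h : x.length ≤ y.length + 1) :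
    pshuffle x (y ++ [c]) = pshuffle x y ++ [c] :=
  (pshuffle_append_singleton x y c).1 h

theorem pshuffle_append_singleton_left {x y : List α} (c : α) (h : y.length ≤ x.length) :
    pshuffle (x ++ [c]) y = pshuffle x y ++ [c] :=
  (pshuffle_append_singleton x y c).2 h

theorem pshuffle_eq_nil_iff {x y : List α} : pshuffle x y = [] ↔ x = [] ∧ y = [] := by
  cases x <;> simp [pshuffle]

theorem bdi_append {u v : List α} (h₁ : u.length ≤ v.length) (h₂ : v.length ≤ u.length + 1) :
    bdi (u ++ v) = pshuffle u v := by
  have half : (u ++ v).length / 2 = u.length := by rw [List.length_append]; omega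
  rw [bdi, half, List.take_left, List.drop_left]

end Pshuffle

def Language.balancedShuffle {α : Type*} (L₁ L₂ : Language α) : Language α :=
  {z | ∃ u ∈ L₁, ∃ v ∈ L₂, u.length ≤ v.length ∧ v.length ≤ u.length + 1 ∧ pshuffle u v = z}

/-- Where a run of the shuffle automaton stands: at `left` the next letter goes to the left
word, at `right` to the right word, and at `done` the right word has taken its extra last
letter. -/
inductive ShufflePhase
  | left
  | right
  | done

namespace ShufflePhase

instance : Finite ShufflePhase :=
  Finite.of_surjective ![left, right, done] (by rintro ⟨⟩; exacts [⟨0, rfl⟩, ⟨1, rfl⟩, ⟨2, rfl⟩])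

def Fits : ShufflePhase → ℕ → ℕ → Prop
  | left, m, n => m = n
  | right, m, n => m = n + 1
  | done, m, n => n = m + 1

theorem exists_fits_ne_right_iff {m n : ℕ} :
    (∃ φ, φ ≠ right ∧ φ.Fits m n) ↔ m ≤ n ∧ n ≤ m + 1 := by
  constructor
  · rintro ⟨φ, hφ, hfit⟩
    cases φ <;> simp only [Fits] at hfit <;> first | omega | exact absurd rfl hφ
  · intro h
    rcases (show m = n ∨ n = m + 1 by omega) with hmn | hnm
    exacts [⟨left, nofun, hmn⟩, ⟨done, nofun, hnm⟩]

end ShufflePhase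

namespace DFA

section Shuffle

variable {α σ₁ σ₂ : Type*}

def shuffleNFA (M₁ : DFA α σ₁) (M₂ : DFA α σ₂) : NFA α (σ₁ × σ₂ × ShufflePhase) where
  step
    | (p, r, .left), a => {(M₁.step p a, r, .right), (p, M₂.step r a, .done)}
    | (p, r, .right), a => {(p, M₂.step r a, .left)}
    | (_, _, .done), _ => ∅
  start := {(M₁.start, M₂.start, .left)}
  accept := {s | s.1 ∈ M₁.accept ∧ s.2.1 ∈ M₂.accept ∧ s.2.2 ≠ .right}

variable (M₁ : DFA α σ₁) (M₂ : DFA α σ₂)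

theorem exists_pshuffle_of_mem_eval_shuffleNFA (z : List α) :
    ∀ p r φ, (p, r, φ) ∈ (M₁.shuffleNFA M₂).eval z → ∃ u v, φ.Fits u.length v.length ∧
      pshuffle u v = z ∧ M₁.eval u = p ∧ M₂.eval v = r := by
  induction z using List.reverseRecOn with
  | nil =>
    rintro p r φ ⟨⟩
    exact ⟨[], [], rfl, by simp [pshuffle], rfl, rfl⟩
  | append_singleton z a ih =>
    intro p r φ h
    rw [NFA.eval_append_singleton, NFA.mem_stepSet] at h
    obtain ⟨⟨p', r', φ'⟩, h', hstep⟩ := h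
    obtain ⟨u, v, hfit, rfl, rfl, rfl⟩ := ih p' r' φ' h'
    cases φ' with
    | left =>
      simp only [ShufflePhase.Fits] at hfit
      rcases hstep with ⟨rfl, rfl, rfl⟩ | ⟨rfl, rfl, rfl⟩
      · exact ⟨u ++ [a], v, by simp [ShufflePhase.Fits, hfit],
          pshuffle_append_singleton_left a hfit.ge, by simp, rfl⟩
      · exact ⟨u, v ++ [a], by simp [ShufflePhase.Fits, hfit],
          pshuffle_append_singleton_right a (by omega), rfl, by simp⟩
    | right =>
      simp only [ShufflePhase.Fits] at hfit
      obtain ⟨rfl, rfl, rfl⟩ := hstep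
      exact ⟨u, v ++ [a], by simp [ShufflePhase.Fits, hfit],
        pshuffle_append_singleton_right a (by omega), rfl, by simp⟩
    | done => exact hstep.elim

theorem mem_eval_shuffleNFA_of_pshuffle (z : List α) :
    ∀ u v φ, φ.Fits u.length v.length → pshuffle u v = z →
      (M₁.eval u, M₂.eval v, φ) ∈ (M₁.shuffleNFA M₂).eval z := by
  induction z using List.reverseRecOn with
  | nil =>
    intro u v φ hfit hz
    obtain ⟨rfl, rfl⟩ := pshuffle_eq_nil_iff.1 hz
    cases φ <;> simp [ShufflePhase.Fits] at hfit
    exact Set.mem_singleton _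
  | append_singleton z a ih =>
    intro u v φ hfit hz
    rw [NFA.eval_append_singleton, NFA.mem_stepSet]
    cases φ with
    | left =>
      rcases v.eq_nil_or_concat' with rfl | ⟨v, b, rfl⟩
      · simp_all [ShufflePhase.Fits, List.length_eq_zero_iff, pshuffle]
      simp only [ShufflePhase.Fits, List.length_append, List.length_singleton] at hfit
      rw [pshuffle_append_singleton_right b (by omega), List.append_singleton_inj] at hz
      obtain ⟨rfl, rfl⟩ := hz
      exact ⟨_, ih u v .right (by simp only [ShufflePhase.Fits]; omega) rfl, by simp [shuffleNFA]⟩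
    | right =>
      rcases u.eq_nil_or_concat' with rfl | ⟨u, b, rfl⟩
      · simp [ShufflePhase.Fits] at hfit
      simp only [ShufflePhase.Fits, List.length_append, List.length_singleton] at hfit
      rw [pshuffle_append_singleton_left b (by omega), List.append_singleton_inj] at hz
      obtain ⟨rfl, rfl⟩ := hz
      exact ⟨_, ih u v .left (by simp only [ShufflePhase.Fits]; omega) rfl, by simp [shuffleNFA]⟩
    | done =>
      rcases v.eq_nil_or_concat' with rfl | ⟨v, b, rfl⟩
      · simp [ShufflePhase.Fits] at hfit
      simp only [ShufflePhase.Fits, List.length_append, List.length_singleton] at hfit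
      rw [pshuffle_append_singleton_right b (by omega), List.append_singleton_inj] at hz
      obtain ⟨rfl, rfl⟩ := hz
      exact ⟨_, ih u v .left (by simp only [ShufflePhase.Fits]; omega) rfl, by simp [shuffleNFA]⟩

theorem accepts_shuffleNFA :
    (M₁.shuffleNFA M₂).accepts = M₁.accepts.balancedShuffle M₂.accepts := by
  ext z
  constructor
  · rintro ⟨⟨p, r, φ⟩, ⟨hp, hr, hφ⟩, hz⟩
    obtain ⟨u, v, hfit, rfl, rfl, rfl⟩ := M₁.exists_pshuffle_of_mem_eval_shuffleNFA M₂ z p r φ hz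
    obtain ⟨h₁, h₂⟩ := ShufflePhase.exists_fits_ne_right_iff.1 ⟨φ, hφ, hfit⟩
    exact ⟨u, hp, v, hr, h₁, h₂, rfl⟩
  · rintro ⟨u, hu, v, hv, h₁, h₂, rfl⟩
    obtain ⟨φ, hφ, hfit⟩ := ShufflePhase.exists_fits_ne_right_iff.2 ⟨h₁, h₂⟩
    exact ⟨(M₁.eval u, M₂.eval v, φ), ⟨hu, hv, hφ⟩,
      M₁.mem_eval_shuffleNFA_of_pshuffle M₂ _ u v φ hfit rfl⟩

end Shuffle

variable {α σ : Type*} (M : DFA α σ)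

theorem mem_acceptsFrom_eval {x y : List α} :
    y ∈ M.acceptsFrom (M.eval x) ↔ x ++ y ∈ M.accepts := by
  rw [mem_acceptsFrom, mem_accepts, eval, evalFrom_of_append]

theorem isRegular_setOf_eval_eq [Fintype σ] (q : σ) : Language.IsRegular {x | M.eval x = q} :=
  Language.isRegular_iff.2 ⟨σ, inferInstance, { M with accept := {q} }, rfl⟩

theorem isRegular_acceptsFrom [Fintype σ] (q : σ) : (M.acceptsFrom q).IsRegular :=
  Language.isRegular_iff.2 ⟨σ, inferInstance, { M with start := q }, rfl⟩

end DFA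

namespace Language

variable {α : Type*}

theorem isRegular_zero : (0 : Language α).IsRegular :=
  ⟨Unit, inferInstance, ⟨fun _ _ => (), (), ∅⟩, rfl⟩

theorem isRegular_iSup {ι : Type*} [Finite ι] {L : ι → Language α} (h : ∀ i, (L i).IsRegular) :
    (⨆ i, L i).IsRegular := by
  cases nonempty_fintype ι
  rw [← Finset.sup_univ_eq_iSup]
  exact Finset.sup_induction isRegular_zero (fun _ h₁ _ h₂ => h₁.add h₂) fun i _ => h i

theorem IsRegular.balancedShuffle {L₁ L₂ : Language α} (h₁ : L₁.IsRegular) (h₂ : L₂.IsRegular) :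
    (L₁.balancedShuffle L₂).IsRegular := by
  obtain ⟨σ₁, _, M₁, rfl⟩ := h₁
  obtain ⟨σ₂, _, M₂, rfl⟩ := h₂
  exact ⟨_, Fintype.ofFinite _, (M₁.shuffleNFA M₂).toDFA,
    by rw [NFA.toDFA_correct, DFA.accepts_shuffleNFA]⟩

end Language

theorem setOf_bdi_eq_iSup {α σ : Type*} (M : DFA α σ) :
    {z | ∃ w ∈ M.accepts, z = bdi w} =
      ⨆ q, Language.balancedShuffle {u | M.eval u = q} (M.acceptsFrom q) := by
  ext z
  constructor
  · rintro ⟨w, hw, rfl⟩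
    refine Language.mem_iSup.2
      ⟨_, w.take (w.length / 2), rfl, w.drop (w.length / 2), ?_, ?_, ?_, rfl⟩
    · rwa [DFA.mem_acceptsFrom_eval, List.take_append_drop]
    all_goals simp only [List.length_take, List.length_drop]; omega
  · intro hz
    obtain ⟨_, u, rfl, v, hv, h₁, h₂, rfl⟩ := Language.mem_iSup.1 hz
    exact ⟨u ++ v, M.mem_acceptsFrom_eval.1 hv, (bdi_append h₁ h₂).symm⟩

/-- If L is regular, then so is bdi(L) = {bdi w : w ∈ L}. -/
theorem bdi_regular {α : Type*} (L : Language α) (h : L.IsRegular) :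
    Language.IsRegular {z | ∃ w ∈ L, z = bdi w} := by
  obtain ⟨σ, _, M, rfl⟩ := h
  rw [setOf_bdi_eq_iSup]
  exact Language.isRegular_iSup fun q =>
    (M.isRegular_setOf_eval_eq q).balancedShuffle (M.isRegular_acceptsFrom q)
end
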